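/- For the generalized Bernoulli polynomials B_n^(d)(a) defined by the generating function e^{−at}/(1−e^{−t})^d = (−1)^d ∑_{n≥0} ((−t)^{n−d}/n!) B_n^(d)(a), the residue of the Barnes zeta function at s = z for z ∈ {1,…,d} is Res_{s=z} ζ_B(s,a) = (−1)^{d+z}/((z−1)!(d−z)!) · B_{d−z}^(d)(a). -/

import Mathlib

/-!
The binomial coefficient `C(d+n-1, n)` is a polynomial of degree `d-1` in `n + a`, say
`∑_{k<d} e_k (n+a)^k`, so `ζ_B(s, a) = ∑_{k<d} e_k ζ_H(s-k, a)` is a finite combination of shifted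
Hurwitz zeta functions. As `ζ_H(·, a)` is entire except for a simple pole of residue `1` at `1`,
the residue of `ζ_B` at `z` is `e_{z-1}`.

Both the `e_k` and the `B_n` are read off the formal power series `e^{-aX} (X / (1 - e^{-X}))^d`.
For the `B_n`, multiply the generating identity by `(1 - e^{-t})^d`, which leaves two convergent
power series agreeing on `(0, 1)`. For the `e_k`,
`∑_k e_k y^k = [X^{d-1}] e^{(y-a)X} (X / (1 - e^{-X}))^d`, and
`[X^m] e^{cX} (X / (1 - e^{-X}))^{m+1} = (c+1)(c+2)⋯(c+m) / m!`, which is `C(n+m, m)` at `c = n`;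
this identity follows by induction on `m` from the differential equation `u + X u' + X u = 1`
of `u = (1 - e^{-X}) / X`.
-/

open Filter Topology Set PowerSeries Finset HurwitzZeta

namespace BarnesZeta

lemma le_radius_ofScalars_of_summable {c : ℕ → ℝ} {r : ℝ} (hr : Summable fun n => c n * r ^ n) :
    (‖r‖₊ : ENNReal) ≤ (FormalMultilinearSeries.ofScalars ℝ c).radius :=
  FormalMultilinearSeries.le_radius_of_tendsto _ (l := 0) <| by
    simpa [FormalMultilinearSeries.ofScalars_norm, norm_mul, norm_pow] using
      hr.tendsto_atTop_zero.norm

lemma summable_norm_mul_pow_of_summable {c : ℕ → ℝ} {r t : ℝ}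
    (hr : Summable fun n => c n * r ^ n) (ht : |t| < |r|) :
    Summable fun n => ‖c n * t ^ n‖ := by
  have ht' : ((‖t‖₊ : NNReal) : ENNReal) < (FormalMultilinearSeries.ofScalars ℝ c).radius :=
    lt_of_lt_of_le (by exact_mod_cast ht) (le_radius_ofScalars_of_summable hr)
  simpa [FormalMultilinearSeries.ofScalars_norm, norm_mul, norm_pow] using
    (FormalMultilinearSeries.ofScalars ℝ c).summable_norm_mul_pow ht'

lemma eq_zero_of_hasSum_mul_pow_eq_zero {c : ℕ → ℝ} {ε : ℝ} (hε : 0 < ε)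
    (h : ∀ t ∈ Ioo 0 ε, HasSum (fun n => c n * t ^ n) 0) : c = 0 := by
  set p := FormalMultilinearSeries.ofScalars ℝ c
  have hradius : 0 < p.radius := by
    have hhalf : ε / 2 ∈ Ioo 0 ε := ⟨by positivity, by linarith⟩
    refine lt_of_lt_of_le ?_ (le_radius_ofScalars_of_summable (h _ hhalf).summable)
    simpa using hε.ne'
  have hp : HasFPowerSeriesAt p.sum p 0 := (p.hasFPowerSeriesOnBall hradius).hasFPowerSeriesAt
  have hzero : ∀ᶠ t in 𝓝[>] (0 : ℝ), p.sum t = 0 := by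
    filter_upwards [Ioo_mem_nhdsGT hε] with t ht
    simpa [p, FormalMultilinearSeries.sum, FormalMultilinearSeries.ofScalars_apply_eq, mul_comm]
      using (h t ht).tsum_eq
  by_contra hc
  have hne := hp.locally_ne_zero (by simpa [p] using hc)
  obtain ⟨t, ht0, htne⟩ := (hzero.and (hne.filter_mono (nhdsWithin_mono _
    fun x hx => ne_of_gt hx))).exists
  exact htne ht0

lemma eq_of_hasSum_coeff_mul_pow {P Q : ℝ⟦X⟧} {ε : ℝ} (hε : 0 < ε) {f : ℝ → ℝ}
    (hP : ∀ t ∈ Ioo 0 ε, HasSum (fun n => coeff n P * t ^ n) (f t))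
    (hQ : ∀ t ∈ Ioo 0 ε, HasSum (fun n => coeff n Q * t ^ n) (f t)) : P = Q := by
  have h := eq_zero_of_hasSum_mul_pow_eq_zero hε (c := fun n => coeff n (P - Q)) fun t ht => by
    simpa [sub_mul] using (hP t ht).sub (hQ t ht)
  ext n
  simpa [sub_eq_zero] using congrFun h n

lemma coeff_rescale_exp (c : ℝ) (n : ℕ) : coeff n (rescale c (exp ℝ)) = c ^ n / n.factorial := by
  simp [coeff_exp, div_eq_mul_inv]

lemma coeff_mul_mul_pow (P Q : ℝ⟦X⟧) (t : ℝ) (n : ℕ) :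
    coeff n (P * Q) * t ^ n =
      ∑ kl ∈ antidiagonal n, (coeff kl.1 P * t ^ kl.1) * (coeff kl.2 Q * t ^ kl.2) := by
  rw [coeff_mul, sum_mul]
  refine sum_congr rfl fun kl hkl => ?_
  rw [← mem_antidiagonal.1 hkl, pow_add]
  ring

def HasAbsSumAt (P : ℝ⟦X⟧) (t s : ℝ) : Prop :=
  Summable (fun n => ‖coeff n P * t ^ n‖) ∧ HasSum (fun n => coeff n P * t ^ n) s

lemma hasAbsSumAt_X_pow (k : ℕ) (t : ℝ) : HasAbsSumAt (X ^ k) t (t ^ k) := by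
  have h : (fun n => coeff n (X ^ k : ℝ⟦X⟧) * t ^ n) = Pi.single k (t ^ k) := by
    ext n
    rw [coeff_X_pow, Pi.single_apply]
    split_ifs <;> simp_all
  rw [HasAbsSumAt, h]
  exact ⟨(hasSum_single k fun n hn => by simp [hn]).summable, hasSum_pi_single k _⟩

lemma hasAbsSumAt_rescale_exp (c t : ℝ) : HasAbsSumAt (rescale c (exp ℝ)) t (Real.exp (c * t)) := by
  have h (n : ℕ) : coeff n (rescale c (exp ℝ)) * t ^ n = (c * t) ^ n / n.factorial := by
    rw [coeff_rescale_exp, mul_pow]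
    ring
  simp only [HasAbsSumAt, h, Real.exp_eq_exp_ℝ]
  refine ⟨?_, NormedSpace.expSeries_div_hasSum_exp (c * t)⟩
  refine (Real.summable_pow_div_factorial ‖c * t‖).congr fun n => ?_
  rw [norm_div, norm_pow, Real.norm_natCast]

namespace HasAbsSumAt

variable {P Q : ℝ⟦X⟧} {t p q : ℝ}

lemma mul (hP : HasAbsSumAt P t p) (hQ : HasAbsSumAt Q t q) : HasAbsSumAt (P * Q) t (p * q) := by
  simp only [HasAbsSumAt, coeff_mul_mul_pow P Q t]
  have hsum := summable_norm_sum_mul_antidiagonal_of_summable_norm hP.1 hQ.1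
  refine ⟨hsum, ?_⟩
  rw [← hP.2.tsum_eq, ← hQ.2.tsum_eq,
    tsum_mul_tsum_eq_tsum_sum_antidiagonal_of_summable_norm hP.1 hQ.1]
  exact hsum.of_norm.hasSum

lemma sub (hP : HasAbsSumAt P t p) (hQ : HasAbsSumAt Q t q) : HasAbsSumAt (P - Q) t (p - q) := by
  simp only [HasAbsSumAt, map_sub, sub_mul]
  exact ⟨(hP.1.add hQ.1).of_nonneg_of_le (fun _ => norm_nonneg _) fun _ => norm_sub_le _ _,
    hP.2.sub hQ.2⟩

lemma pow (hP : HasAbsSumAt P t p) (d : ℕ) : HasAbsSumAt (P ^ d) t (p ^ d) := by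
  induction d with
  | zero => simpa using hasAbsSumAt_X_pow 0 t
  | succ d ih => simpa [pow_succ] using ih.mul hP

end HasAbsSumAt

lemma derivative_rescale_exp (c : ℝ) :
    d⁄dX ℝ (rescale c (exp ℝ)) = C c * rescale c (exp ℝ) := by
  ext n
  rw [coeff_derivative, coeff_C_mul, coeff_rescale_exp, coeff_rescale_exp, Nat.factorial_succ,
    pow_succ]
  push_cast
  field_simp

noncomputable def oneSubExpNegDivX : ℝ⟦X⟧ := mk fun n => (-1) ^ n / (n + 1).factorial

lemma constantCoeff_oneSubExpNegDivX : constantCoeff oneSubExpNegDivX = 1 := by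
  simp [oneSubExpNegDivX, ← coeff_zero_eq_constantCoeff_apply]

lemma X_mul_oneSubExpNegDivX : X * oneSubExpNegDivX = 1 - rescale (-1) (exp ℝ) := by
  ext n
  rcases n with _ | n
  · rw [coeff_zero_X_mul, map_sub, coeff_one, coeff_rescale_exp]
    simp
  · rw [coeff_succ_X_mul, map_sub, coeff_rescale_exp, coeff_one, if_neg n.succ_ne_zero,
      oneSubExpNegDivX, coeff_mk, pow_succ]
    ring

lemma oneSubExpNegDivX_ode :
    oneSubExpNegDivX + X * d⁄dX ℝ oneSubExpNegDivX + X * oneSubExpNegDivX = 1 := by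
  have h := congrArg (d⁄dX ℝ) X_mul_oneSubExpNegDivX
  rw [Derivation.leibniz, map_sub, Derivation.map_one_eq_zero, derivative_rescale_exp,
    derivative_X, smul_eq_mul, smul_eq_mul, map_neg, map_one] at h
  linear_combination h + X_mul_oneSubExpNegDivX

lemma oneSubExpNegDivX_inv_mul_cancel : oneSubExpNegDivX⁻¹ * oneSubExpNegDivX = 1 :=
  PowerSeries.inv_mul_cancel _ (by simp [constantCoeff_oneSubExpNegDivX])

lemma derivative_rescale_exp_mul_inv_pow (c : ℝ) (m : ℕ) :
    d⁄dX ℝ (rescale c (exp ℝ) * oneSubExpNegDivX⁻¹ ^ (m + 1)) =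
      C c * (rescale c (exp ℝ) * oneSubExpNegDivX⁻¹ ^ (m + 1)) -
        C ((m : ℝ) + 1) * (rescale c (exp ℝ) * oneSubExpNegDivX⁻¹ ^ (m + 2) *
          d⁄dX ℝ oneSubExpNegDivX) := by
  rw [Derivation.leibniz, Derivation.leibniz_pow, derivative_inv', derivative_rescale_exp]
  simp only [smul_eq_mul, nsmul_eq_mul, Nat.add_sub_cancel, map_add, map_natCast, map_one]
  push_cast
  ring

lemma rescale_exp_mul_inv_pow_succ (c : ℝ) (m : ℕ) :
    ((m : ℝ) + 1) • (rescale c (exp ℝ) * oneSubExpNegDivX⁻¹ ^ (m + 2)) =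
      ((m : ℝ) + 1 + c) • (X * (rescale c (exp ℝ) * oneSubExpNegDivX⁻¹ ^ (m + 1))) +
        ((m : ℝ) + 1) • (rescale c (exp ℝ) * oneSubExpNegDivX⁻¹ ^ (m + 1)) -
          X * d⁄dX ℝ (rescale c (exp ℝ) * oneSubExpNegDivX⁻¹ ^ (m + 1)) := by
  rw [derivative_rescale_exp_mul_inv_pow]
  simp only [smul_eq_C_mul, map_add, map_natCast, map_one]
  linear_combination (-(rescale c (exp ℝ)) * oneSubExpNegDivX⁻¹ ^ (m + 2) * (m + 1)) *
    oneSubExpNegDivX_ode +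
    ((m + 1) * rescale c (exp ℝ) * oneSubExpNegDivX⁻¹ ^ (m + 1) * (X + 1)) *
      oneSubExpNegDivX_inv_mul_cancel

lemma coeff_rescale_exp_mul_inv_pow (c : ℝ) (m : ℕ) :
    coeff m (rescale c (exp ℝ) * oneSubExpNegDivX⁻¹ ^ (m + 1)) =
      (ascPochhammer ℝ m).eval (c + 1) / m.factorial := by
  induction m with
  | zero =>
    rw [coeff_zero_eq_constantCoeff_apply, map_mul, map_pow, constantCoeff_inv,
      constantCoeff_oneSubExpNegDivX, ← coeff_zero_eq_constantCoeff_apply, coeff_rescale_exp]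
    simp
  | succ m ih =>
    have h := congrArg (coeff (m + 1)) (rescale_exp_mul_inv_pow_succ c m)
    simp only [map_sub, map_add, coeff_smul, smul_eq_mul, coeff_succ_X_mul, coeff_derivative,
      ih] at h
    rw [ascPochhammer_succ_eval, Nat.factorial_succ, Nat.cast_mul, Nat.cast_succ,
      eq_div_iff (by positivity)]
    field_simp at h
    linear_combination h

lemma coeff_rescale_exp_mul (y : ℝ) (F : ℝ⟦X⟧) (m : ℕ) :
    coeff m (rescale y (exp ℝ) * F) =
      ∑ k ∈ range (m + 1), coeff (m - k) F / k.factorial * y ^ k := by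
  rw [coeff_mul, Nat.sum_antidiagonal_eq_sum_range_succ (fun i j => coeff i _ * coeff j F)]
  refine sum_congr rfl fun k _ => ?_
  rw [coeff_rescale_exp]
  ring

noncomputable def genBernoulliSeries (d : ℕ) (a : ℝ) : ℝ⟦X⟧ :=
  rescale (-a) (exp ℝ) * oneSubExpNegDivX⁻¹ ^ d

lemma sum_coeff_genBernoulliSeries_mul_pow {d : ℕ} (hd : 1 ≤ d) (a : ℝ) (n : ℕ) :
    ∑ k ∈ range d, coeff (d - 1 - k) (genBernoulliSeries d a) / k.factorial * ((n : ℝ) + a) ^ k =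
      (d + n - 1).choose n := by
  obtain ⟨m, rfl⟩ : ∃ m, d = m + 1 := ⟨d - 1, by omega⟩
  rw [Nat.add_sub_cancel, show m + 1 + n - 1 = n + m by omega, Nat.choose_symm_add,
    ← coeff_rescale_exp_mul, genBernoulliSeries, ← mul_assoc, exp_mul_exp_eq_exp_add,
    coeff_rescale_exp_mul_inv_pow, add_neg_cancel_right, ← Nat.cast_succ, ← ascPochhammer_eval_cast,
    ascPochhammer_nat_eq_ascFactorial, Nat.ascFactorial_eq_factorial_mul_choose]
  push_cast
  field_simp

def IsBernoulliGenerating (d : ℕ) (a : ℝ) (B : ℕ → ℝ) : Prop :=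
  ∀ t ∈ Ioo (0 : ℝ) 1, Real.exp (-a * t) / (1 - Real.exp (-t)) ^ d =
    (-1) ^ d * ∑' n : ℕ, (-t) ^ ((n : ℤ) - d) / n.factorial * B n

namespace IsBernoulliGenerating

variable {d : ℕ} {a : ℝ} {B : ℕ → ℝ}

lemma hasSum (hB : IsBernoulliGenerating d a B) {t : ℝ} (ht : t ∈ Ioo (0 : ℝ) 1) :
    HasSum (fun n => (-1) ^ n * B n / n.factorial * t ^ n)
      (t ^ d * (Real.exp (-a * t) / (1 - Real.exp (-t)) ^ d)) := by
  have hpos : 0 < Real.exp (-a * t) / (1 - Real.exp (-t)) ^ d := by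
    have : Real.exp (-t) < 1 := Real.exp_lt_one_iff.2 (by linarith [ht.1])
    have : 0 < 1 - Real.exp (-t) := by linarith
    positivity
  have hsummable : Summable fun n : ℕ => (-t) ^ ((n : ℤ) - d) / n.factorial * B n := by
    by_contra hns
    have h := hB t ht
    rw [tsum_eq_zero_of_not_summable hns, mul_zero] at h
    exact hpos.ne' h
  have hnt : -t ≠ 0 := neg_ne_zero.2 ht.1.ne'
  have hterm (n : ℕ) : (-1) ^ n * B n / n.factorial * t ^ n =
      (-t) ^ d * ((-t) ^ ((n : ℤ) - d) / n.factorial * B n) := by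
    rw [zpow_sub₀ hnt, zpow_natCast, zpow_natCast, neg_pow t n]
    field_simp
  have hsum : t ^ d * (Real.exp (-a * t) / (1 - Real.exp (-t)) ^ d) =
      (-t) ^ d * ∑' n : ℕ, (-t) ^ ((n : ℤ) - d) / n.factorial * B n := by
    rw [hB t ht, neg_pow t]
    ring
  simpa only [hterm, hsum] using hsummable.hasSum.mul_left ((-t) ^ d)

lemma hasAbsSumAt (hB : IsBernoulliGenerating d a B) {t : ℝ} (ht : t ∈ Ioo (0 : ℝ) 1) :
    HasAbsSumAt (mk fun n => (-1) ^ n * B n / n.factorial) t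
      (t ^ d * (Real.exp (-a * t) / (1 - Real.exp (-t)) ^ d)) := by
  have hr : (t + 1) / 2 ∈ Ioo (0 : ℝ) 1 := ⟨by linarith [ht.1], by linarith [ht.2]⟩
  simp only [HasAbsSumAt, coeff_mk]
  refine ⟨summable_norm_mul_pow_of_summable (hB.hasSum hr).summable ?_, hB.hasSum ht⟩
  rw [abs_of_pos ht.1, abs_of_pos hr.1]
  linarith [ht.2]

lemma mk_eq (hB : IsBernoulliGenerating d a B) :
    (mk fun n => (-1) ^ n * B n / n.factorial) = genBernoulliSeries d a := by
  set S : ℝ⟦X⟧ := mk fun n => (-1) ^ n * B n / n.factorial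
  have hprod : S * (1 - rescale (-1) (exp ℝ)) ^ d = X ^ d * rescale (-a) (exp ℝ) := by
    refine eq_of_hasSum_coeff_mul_pow one_pos (f := fun t => t ^ d * Real.exp (-a * t))
      (fun t ht => ?_) (fun t _ => ((hasAbsSumAt_X_pow d t).mul (hasAbsSumAt_rescale_exp _ t)).2)
    have hden : 1 - Real.exp (-t) ≠ 0 := by
      linarith [Real.exp_lt_one_iff.2 (by linarith [ht.1] : -t < 0)]
    have h := (hB.hasAbsSumAt ht).mul
      (((hasAbsSumAt_X_pow 0 t).sub (hasAbsSumAt_rescale_exp (-1) t)).pow d)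
    simp only [pow_zero, neg_one_mul] at h
    convert h.2 using 1
    field_simp
  rw [← X_mul_oneSubExpNegDivX, mul_pow, mul_left_comm] at hprod
  have hcancel := mul_left_cancel₀ (pow_ne_zero d X_ne_zero) hprod
  rw [genBernoulliSeries, ← hcancel, mul_assoc, ← mul_pow,
    PowerSeries.mul_inv_cancel _ (by simp [constantCoeff_oneSubExpNegDivX]), one_pow, mul_one]

lemma eq_coeff (hB : IsBernoulliGenerating d a B) (n : ℕ) :
    B n = (-1) ^ n * n.factorial * coeff n (genBernoulliSeries d a) := by
  rw [← hB.mk_eq, coeff_mk]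
  field_simp
  rw [← pow_mul, pow_mul', neg_one_sq, one_pow, mul_one]

lemma residue_coeff_eq (hB : IsBernoulliGenerating d a B) {z : ℕ} (hz1 : 1 ≤ z) (hzd : z ≤ d) :
    (-1) ^ (d + z) / ((z - 1).factorial * (d - z).factorial) * B (d - z) =
      coeff (d - 1 - (z - 1)) (genBernoulliSeries d a) / (z - 1).factorial := by
  rw [hB.eq_coeff, show d - 1 - (z - 1) = d - z by omega]
  have hsign : (-1 : ℝ) ^ (d + z) * (-1) ^ (d - z) = 1 := by
    rw [← pow_add, show d + z + (d - z) = 2 * d by omega, pow_mul, neg_one_sq, one_pow]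
  field_simp
  linear_combination coeff (d - z) (genBernoulliSeries d a) * hsign

end IsBernoulliGenerating

/-- Mathlib's `hurwitzZeta` takes its shift in `UnitAddCircle` and gives the Dirichlet series only
for shifts in `[0, 1]`, so write `a = N + b` with `b ∈ (0, 1]` and drop the first `N` terms. -/
lemma exists_hurwitzZeta_of_pos {a : ℝ} (ha : 0 < a) :
    ∃ F : ℂ → ℂ, (∀ s ≠ 1, DifferentiableAt ℂ F s) ∧
      (∀ s : ℂ, 1 < s.re → HasSum (fun n : ℕ => ((n : ℂ) + a) ^ (-s)) (F s)) ∧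
      Tendsto (fun s => (s - 1) * F s) (𝓝[≠] 1) (𝓝 1) := by
  obtain ⟨N, b, hb0, hb1, rfl⟩ : ∃ (N : ℕ) (b : ℝ), 0 < b ∧ b ≤ 1 ∧ a = N + b := by
    refine ⟨⌈a⌉₊ - 1, a - (⌈a⌉₊ - 1 : ℕ), ?_, ?_, by ring⟩ <;>
      rw [Nat.cast_sub (Nat.one_le_ceil_iff.2 ha), Nat.cast_one]
    · linarith [Nat.ceil_lt_add_one ha.le]
    · linarith [Nat.le_ceil a]
  set P : ℂ → ℂ := fun s => ∑ n ∈ range N, ((n : ℂ) + b) ^ (-s)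
  have hP : Differentiable ℂ P := fun s =>
    DifferentiableAt.fun_sum fun n _ => differentiableAt_id.neg.const_cpow <| Or.inl <| by
      exact_mod_cast (by positivity : (n : ℝ) + b ≠ 0)
  refine ⟨fun s => hurwitzZeta b s - P s,
    fun s hs => (differentiableAt_hurwitzZeta _ hs).sub (hP s), fun s hs => ?_, ?_⟩
  · have h := hasSum_hurwitzZeta_of_one_lt_re ⟨hb0.le, hb1⟩ hs
    simp only [one_div, ← Complex.cpow_neg] at h
    simpa only [Nat.cast_add, Complex.ofReal_add, Complex.ofReal_natCast, add_assoc] using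
      (hasSum_nat_add_iff' N).2 h
  · have hP1 : Tendsto (fun s => (s - 1) * P s) (𝓝[≠] 1) (𝓝 0) := by
      simpa using ((tendsto_id.sub_const 1).mul (hP.continuous.tendsto 1)).mono_left
        nhdsWithin_le_nhds
    simpa [mul_sub] using (hurwitzZeta_residue_one b).sub hP1

def shiftCombination (F : ℂ → ℂ) (e : ℕ → ℂ) (d : ℕ) (s : ℂ) : ℂ :=
  ∑ k ∈ range d, e k * F (s - k)

variable {F : ℂ → ℂ} (e : ℕ → ℂ) (d : ℕ)

lemma analyticOnNhd_shiftCombination (hF : ∀ s ≠ 1, DifferentiableAt ℂ F s) :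
    AnalyticOnNhd ℂ (shiftCombination F e d) {w : ℂ | ∃ k : ℕ, 1 ≤ k ∧ k ≤ d ∧ w = k}ᶜ := by
  have hfinite : {w : ℂ | ∃ k : ℕ, 1 ≤ k ∧ k ≤ d ∧ w = k}.Finite :=
    ((Set.finite_Icc 1 d).image (fun k : ℕ => (k : ℂ))).subset
      fun w ⟨k, h1, h2, hw⟩ => ⟨k, ⟨h1, h2⟩, hw.symm⟩
  refine DifferentiableOn.analyticOnNhd (fun s hs => ?_) hfinite.isClosed.isOpen_compl
  refine (DifferentiableAt.fun_sum fun k hk => ?_).differentiableWithinAt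
  refine ((hF (s - k) fun h => hs ⟨k + 1, by omega, by simpa using hk, ?_⟩).comp s
    (differentiableAt_id.sub_const (k : ℂ))).const_mul _
  push_cast
  linear_combination h

lemma hasSum_shiftCombination {a : ℝ} (ha : 0 < a)
    (hF : ∀ s : ℂ, 1 < s.re → HasSum (fun n : ℕ => ((n : ℂ) + a) ^ (-s)) (F s))
    {s : ℂ} (hs : d < s.re) :
    HasSum (fun n : ℕ => (∑ k ∈ range d, e k * ((n : ℂ) + a) ^ k) * ((n : ℂ) + a) ^ (-s))
      (shiftCombination F e d s) := by
  refine (hasSum_sum fun (k : ℕ) hk => (hF (s - k) ?_).mul_left (e k)).congr_fun fun n => ?_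
  · have : (k : ℝ) + 1 ≤ d := by exact_mod_cast mem_range.1 hk
    simp only [Complex.sub_re, Complex.natCast_re]
    linarith
  · have hna : (n : ℂ) + a ≠ 0 := by exact_mod_cast (by positivity : (n : ℝ) + a ≠ 0)
    rw [sum_mul]
    refine sum_congr rfl fun k _ => ?_
    rw [neg_sub, sub_eq_add_neg, Complex.cpow_add _ _ hna, Complex.cpow_natCast, mul_assoc]

lemma tendsto_sub_mul_shiftCombination (hF : ∀ s ≠ 1, ContinuousAt F s)
    (hres : Tendsto (fun s => (s - 1) * F s) (𝓝[≠] 1) (𝓝 1))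
    {z : ℕ} (hz1 : 1 ≤ z) (hzd : z ≤ d) :
    Tendsto (fun s => (s - z) * shiftCombination F e d s) (𝓝[≠] (z : ℂ)) (𝓝 (e (z - 1))) := by
  have hterm : ∀ k ∈ range d, Tendsto (fun s => (s - z) * (e k * F (s - k))) (𝓝[≠] (z : ℂ))
      (𝓝 (if k = z - 1 then e k else 0)) := by
    intro k _
    split_ifs with hk
    · have hkz : (k : ℂ) = z - 1 := by rw [hk, Nat.cast_sub hz1, Nat.cast_one]
      have hshift : Tendsto (fun s : ℂ => s - k) (𝓝[≠] (z : ℂ)) (𝓝[≠] 1) := by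
        refine tendsto_nhdsWithin_iff.2 ⟨?_, eventually_nhdsWithin_of_forall fun s hs => ?_⟩
        · refine ((continuous_sub_right _).tendsto' _ _ ?_).mono_left nhdsWithin_le_nhds
          rw [hkz]
          ring
        · intro h
          apply hs
          simp only [mem_singleton_iff] at h ⊢
          linear_combination h + hkz
      simpa [hkz, sub_sub, mul_left_comm] using (hres.comp hshift).const_mul (e k)
    · have hne : (z : ℂ) - k ≠ 1 := fun h => hk (by
        have : (z : ℂ) = (k + 1 : ℕ) := by push_cast; linear_combination h
        have := Nat.cast_injective this
        omega)
      have hlim := (tendsto_id.sub_const (z : ℂ)).mul (((hF _ hne).tendsto.comp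
        (tendsto_id.sub_const (k : ℂ))).const_mul (e k))
      simpa using tendsto_nhdsWithin_of_tendsto_nhds hlim
  have hsum := tendsto_finsetSum _ hterm
  rw [sum_ite_eq', if_pos (Finset.mem_range.2 (by omega))] at hsum
  simpa only [shiftCombination, mul_sum] using hsum

end BarnesZeta

open BarnesZeta

open Filter Topology in
theorem barnes_zeta_residues_bernoulli_general (d : ℕ) (a : ℝ) (ha : 0 < a)
    (B : ℕ → ℝ)
    (hB : ∀ t ∈ Set.Ioo (0 : ℝ) 1,
      Real.exp (-a * t) / (1 - Real.exp (-t)) ^ d =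
        (-1) ^ d * ∑' n : ℕ, (-t) ^ ((n : ℤ) - d) / n.factorial * B n)
    (z : ℕ) (hz1 : 1 ≤ z) (hzd : z ≤ d) :
    ∃ g : ℂ → ℂ,
      AnalyticOnNhd ℂ g
        ({w : ℂ | 0 < w.re} \ {w : ℂ | ∃ k : ℕ, 1 ≤ k ∧ k ≤ d ∧ w = (k : ℂ)}) ∧
      (∀ s : ℂ, (d : ℝ) < s.re →
        g s = ∑' n : ℕ, ((d + n - 1).choose n : ℂ) * ((n : ℂ) + a) ^ (-s)) ∧
      Tendsto (fun s : ℂ => (s - (z : ℂ)) * g s) (𝓝[≠] (z : ℂ))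
        (𝓝 ((-1 : ℂ) ^ (d + z) / ((z - 1).factorial * (d - z).factorial) * B (d - z))) := by
  set e : ℕ → ℂ := fun k => (coeff (d - 1 - k) (genBernoulliSeries d a) / k.factorial : ℝ)
  obtain ⟨F, hFdiff, hFsum, hFres⟩ := exists_hurwitzZeta_of_pos ha
  refine ⟨shiftCombination F e d,
    (analyticOnNhd_shiftCombination e d hFdiff).mono fun w hw => hw.2, fun s hs => ?_, ?_⟩
  · refine (hasSum_shiftCombination e d ha hFsum hs).tsum_eq.symm.trans (tsum_congr fun n => ?_)
    congr 1
    simp only [e]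
    exact_mod_cast sum_coeff_genBernoulliSeries_mul_pow (hz1.trans hzd) a n
  · convert tendsto_sub_mul_shiftCombination e d (fun s hs => (hFdiff s hs).continuousAt) hFres
      hz1 hzd using 2
    simp only [e]
    exact_mod_cast IsBernoulliGenerating.residue_coeff_eq hB hz1 hzd

open Filter Topology in
/-- Residues of the Barnes zeta function in terms of generalized Bernoulli
polynomials.  Suppose `B n = B_n^{(d)}(a)` satisfies the generating identity
`e^{−at}/(1−e^{−t})^d = (−1)^d ∑_{n≥0} (−t)^{n−d}/n! · B n` for small `t > 0`.
Then for each `z ∈ {1,…,d}`, the meromorphic continuation of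
`ζ_B(s,a) = ∑_{n≥0} C(d+n−1,n)(n+a)^{−s}` has residue
`(−1)^{d+z}/((z−1)!(d−z)!) · B (d−z)` at `s = z`. -/
theorem barnes_zeta_residues_bernoulli (d : ℕ) (hd : 1 ≤ d) (a : ℝ) (ha : 0 < a)
    (B : ℕ → ℝ)
    (hB : ∀ t ∈ Set.Ioo (0 : ℝ) 1,
      Real.exp (-a * t) / (1 - Real.exp (-t)) ^ d =
        (-1) ^ d * ∑' n : ℕ, (-t) ^ ((n : ℤ) - d) / n.factorial * B n)
    (z : ℕ) (hz1 : 1 ≤ z) (hzd : z ≤ d) :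
    ∃ g : ℂ → ℂ,
      AnalyticOnNhd ℂ g
        ({w : ℂ | 0 < w.re} \ {w : ℂ | ∃ k : ℕ, 1 ≤ k ∧ k ≤ d ∧ w = (k : ℂ)}) ∧
      (∀ s : ℂ, (d : ℝ) < s.re →
        g s = ∑' n : ℕ, ((d + n - 1).choose n : ℂ) * ((n : ℂ) + a) ^ (-s)) ∧
      Tendsto (fun s : ℂ => (s - (z : ℂ)) * g s) (𝓝[≠] (z : ℂ))
        (𝓝 ((-1 : ℂ) ^ (d + z) / ((z - 1).factorial * (d - z).factorial) * B (d - z))) :=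
  barnes_zeta_residues_bernoulli_general d a ha B hB z hz1 hzd
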